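/- Let f = h + ḡ be a locally univalent harmonic mapping near α with f(α) = 0, and F the harmonic Newton map F(z) = z − (h'(z)̄ f(z) − conj(g'(z)f(z)))/J(z) with J = |h'|²−|g'|². Then the Wirtinger derivative ∂F/∂z vanishes at α, and in fact ∂F/∂z (z) = ( h'(z)̄ f(z) − conj(g'(z)f(z)) ) J_z(z)/J²(z). -/

import Mathlib

open Complex ComplexConjugate

/-- The Wirtinger derivative `∂f/∂z = (1/2)(∂f/∂x - i ∂f/∂y)`. -/
noncomputable def wirtingerZ (f : ℂ → ℂ) (z : ℂ) : ℂ :=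
  (fderiv ℝ f z 1 - Complex.I * fderiv ℝ f z Complex.I) / 2

/-- The Jacobian `J = |h'|² - |g'|²` of the harmonic map `f = h + conj g`. -/
noncomputable def jac (h g : ℂ → ℂ) (z : ℂ) : ℝ :=
  ‖deriv h z‖ ^ 2 - ‖deriv g z‖ ^ 2

/-- The Jacobian, viewed as a complex-valued function. -/
noncomputable def jacC (h g : ℂ → ℂ) (z : ℂ) : ℂ := (jac h g z : ℂ)

/-- The harmonic pre-Schwarzian derivative `P_H(f) = ∂_z log J` of `f = h + conj g`. -/
noncomputable def preSchwarzianH (h g : ℂ → ℂ) (z : ℂ) : ℂ :=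
  wirtingerZ (fun w => (Real.log (jac h g w) : ℂ)) z

/-- The harmonic Schwarzian derivative `S_H(f) = ∂_z(P_H(f)) - (1/2)(P_H(f))²`. -/
noncomputable def schwarzianH (h g : ℂ → ℂ) (z : ℂ) : ℂ :=
  wirtingerZ (preSchwarzianH h g) z - (1 / 2) * (preSchwarzianH h g z) ^ 2

/-- The classical Schwarzian derivative `S(h) = h'''/h' - (3/2)(h''/h')²`. -/
noncomputable def schwarzian (φ : ℂ → ℂ) (z : ℂ) : ℂ :=
  deriv (deriv (deriv φ)) z / deriv φ z - (3 / 2) * (deriv (deriv φ) z / deriv φ z) ^ 2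

/-- The harmonic map `f = h + conj g`. -/
noncomputable def harm (h g : ℂ → ℂ) (z : ℂ) : ℂ := h z + conj (g z)

/-- `N(z) = conj(h'(z)) f(z) - conj(g'(z) f(z))` for `f = h + conj g`. -/
noncomputable def Nmap (h g : ℂ → ℂ) (z : ℂ) : ℂ :=
  conj (deriv h z) * harm h g z - conj (deriv g z * harm h g z)

/-- The harmonic Newton map `F(z) = z - N(z)/J(z)`. -/
noncomputable def newtonMapH (h g : ℂ → ℂ) (z : ℂ) : ℂ :=
  z - Nmap h g z / jacC h g z

/-- The numerator `A` of the harmonic Halley correction. -/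
noncomputable def Amap (h g : ℂ → ℂ) (z : ℂ) : ℂ :=
  (conj (deriv h z) - conj (deriv (deriv h) z) / 2 * (conj (Nmap h g z) / jacC h g z)) *
      harm h g z -
    (conj (deriv g z) - conj (deriv (deriv g) z) / 2 * (conj (Nmap h g z) / jacC h g z)) *
      conj (harm h g z)

/-- The denominator `B` of the harmonic Halley correction. -/
noncomputable def Bmap (h g : ℂ → ℂ) (z : ℂ) : ℂ :=
  ((‖deriv h z - deriv (deriv h) z / 2 * (Nmap h g z / jacC h g z)‖ ^ 2 -
      ‖deriv g z - deriv (deriv g) z / 2 * (Nmap h g z / jacC h g z)‖ ^ 2 : ℝ) : ℂ)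

/-- The harmonic Halley map `F(z) = z - A(z)/B(z)`. -/
noncomputable def halleyMapH (h g : ℂ → ℂ) (z : ℂ) : ℂ :=
  z - Amap h g z / Bmap h g z

noncomputable def conjCLM : ℂ →L[ℝ] ℂ := Complex.conjCLE.toContinuousLinearMap

noncomputable def wl (a b : ℂ) : ℂ →L[ℝ] ℂ :=
  a • ContinuousLinearMap.id ℝ ℂ + b • conjCLM

lemma wl_apply (a b v : ℂ) : wl a b v = a * v + b * conj v := by
  simp [wl, conjCLM, smul_eq_mul]

def HW (F : ℂ → ℂ) (z a b : ℂ) : Prop := HasFDerivAt F (wl a b) z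

lemma hw_of_L {F : ℂ → ℂ} {L : ℂ →L[ℝ] ℂ} {z a b : ℂ} (hF : HasFDerivAt F L z)
    (hL : ∀ v, L v = a * v + b * conj v) : HW F z a b := by
  have hE : L = wl a b := ContinuousLinearMap.ext fun v => by rw [wl_apply, hL]
  unfold HW
  exact hE ▸ hF

lemma HW.wirt {F : ℂ → ℂ} {z a b : ℂ} (hF : HW F z a b) : wirtingerZ F z = a := by
  have hfd : fderiv ℝ F z = wl a b := hF.fderiv
  simp only [wirtingerZ, hfd, wl_apply, map_one, Complex.conj_I]
  field_simp
  ring_nf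
  rw [Complex.I_sq]
  ring

lemma hw_id (z : ℂ) : HW (fun w => w) z 1 0 :=
  hw_of_L (hasFDerivAt_id z) (fun v => by simp)

lemma hw_of_hasDerivAt {F : ℂ → ℂ} {f' z : ℂ} (hF : HasDerivAt F f' z) : HW F z f' 0 :=
  hw_of_L (hF.hasFDerivAt.restrictScalars ℝ) (fun v => by simp [smul_eq_mul, mul_comm])

lemma HW.sub {F G : ℂ → ℂ} {z a₁ b₁ a₂ b₂ : ℂ} (h₁ : HW F z a₁ b₁) (h₂ : HW G z a₂ b₂) :
    HW (fun w => F w - G w) z (a₁ - a₂) (b₁ - b₂) :=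
  hw_of_L (HasFDerivAt.sub h₁ h₂) (fun v => by simp [wl_apply]; ring)

lemma HW.add {F G : ℂ → ℂ} {z a₁ b₁ a₂ b₂ : ℂ} (h₁ : HW F z a₁ b₁) (h₂ : HW G z a₂ b₂) :
    HW (fun w => F w + G w) z (a₁ + a₂) (b₁ + b₂) :=
  hw_of_L (HasFDerivAt.add h₁ h₂) (fun v => by simp [wl_apply]; ring)

lemma HW.mul {F G : ℂ → ℂ} {z a₁ b₁ a₂ b₂ : ℂ} (h₁ : HW F z a₁ b₁) (h₂ : HW G z a₂ b₂) :
    HW (fun w => F w * G w) z (a₁ * G z + F z * a₂) (b₁ * G z + F z * b₂) :=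
  hw_of_L (HasFDerivAt.mul h₁ h₂) (fun v => by
    simp [wl_apply, smul_eq_mul]; ring)

lemma HW.conj {F : ℂ → ℂ} {z a b : ℂ} (hF : HW F z a b) :
    HW (fun w => conj (F w)) z (conj b) (conj a) := by
  have hc : HasFDerivAt (fun w : ℂ => conj w) conjCLM (F z) := conjCLM.hasFDerivAt
  refine hw_of_L (hc.comp z hF) (fun v => ?_)
  simp only [ContinuousLinearMap.comp_apply, wl_apply, conjCLM,
    ContinuousLinearEquiv.coe_coe, Complex.conjCLE_apply, map_add, map_mul,
    Complex.conj_conj]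
  ring

lemma HW.inv {F : ℂ → ℂ} {z a b : ℂ} (hF : HW F z a b) (hne : F z ≠ 0) :
    HW (fun w => (F w)⁻¹) z (-a / (F z) ^ 2) (-b / (F z) ^ 2) := by
  have hi : HasFDerivAt (Inv.inv : ℂ → ℂ)
      (-ContinuousLinearMap.mulLeftRight ℝ ℂ (F z)⁻¹ (F z)⁻¹) (F z) := hasFDerivAt_inv' hne
  refine hw_of_L (hi.comp z hF) (fun v => ?_)
  have h2 : (F z) ^ 2 ≠ 0 := pow_ne_zero _ hne
  simp only [ContinuousLinearMap.comp_apply, ContinuousLinearMap.neg_apply,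
    ContinuousLinearMap.mulLeftRight_apply, wl_apply]
  field_simp
  ring

lemma jacC_eq (h g : ℂ → ℂ) (w : ℂ) :
    jacC h g w = conj (deriv h w) * deriv h w - conj (deriv g w) * deriv g w := by
  rw [mul_comm (conj (deriv h w)), mul_comm (conj (deriv g w)), Complex.mul_conj,
    Complex.mul_conj]
  simp [jacC, jac, Complex.normSq_eq_norm_sq]

theorem newtonMapH_wirtinger_deriv (h g : ℂ → ℂ) (U : Set ℂ) (hU : IsOpen U) (α : ℂ)
    (hα : α ∈ U) (hh : DifferentiableOn ℂ h U) (hg : DifferentiableOn ℂ g U)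
    (hJ : ∀ z ∈ U, jac h g z ≠ 0) (hzero : harm h g α = 0) :
    wirtingerZ (newtonMapH h g) α = 0 ∧
      ∀ z ∈ U, wirtingerZ (newtonMapH h g) z =
        Nmap h g z * wirtingerZ (jacC h g) z / (jacC h g z) ^ 2 := by
  have hAh : AnalyticOnNhd ℂ h U := hh.analyticOnNhd hU
  have hAg : AnalyticOnNhd ℂ g U := hg.analyticOnNhd hU
  have key : ∀ z ∈ U, wirtingerZ (newtonMapH h g) z =
      Nmap h g z * wirtingerZ (jacC h g) z / (jacC h g z) ^ 2 := by
    intro z hz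
    have hhz : HasDerivAt h (deriv h z) z := ((hAh z hz).differentiableAt).hasDerivAt
    have hgz : HasDerivAt g (deriv g z) z := ((hAg z hz).differentiableAt).hasDerivAt
    have hh'z : HasDerivAt (deriv h) (deriv (deriv h) z) z :=
      ((hAh.deriv z hz).differentiableAt).hasDerivAt
    have hg'z : HasDerivAt (deriv g) (deriv (deriv g) z) z :=
      ((hAg.deriv z hz).differentiableAt).hasDerivAt
    have hne : jacC h g z ≠ 0 := by
      simpa [jacC] using Complex.ofReal_ne_zero.mpr (hJ z hz)
    -- HW for harm
    have hwf : HW (harm h g) z (deriv h z) (conj (deriv g z)) := by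
      have t := (hw_of_hasDerivAt hhz).add ((hw_of_hasDerivAt hgz).conj)
      exact hw_of_L t (fun v => by rw [wl_apply]; simp)
    -- HW for Nmap
    have hwN : HW (Nmap h g) z (jacC h g z)
        (conj (deriv (deriv h) z) * harm h g z + conj (deriv h z) * conj (deriv g z)
          - conj (deriv (deriv g) z * harm h g z + deriv g z * deriv h z)) := by
      have t := (((hw_of_hasDerivAt hh'z).conj).mul hwf).sub
        (((hw_of_hasDerivAt hg'z).mul hwf).conj)
      refine hw_of_L t (fun v => ?_)
      rw [wl_apply, jacC_eq]
      simp only [map_zero, map_add, map_mul, Complex.conj_conj]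
      ring
    -- HW for jacC
    have hwJ : HW (jacC h g) z
        (conj (deriv h z) * deriv (deriv h) z - conj (deriv g z) * deriv (deriv g) z)
        (conj (deriv (deriv h) z) * deriv h z - conj (deriv (deriv g) z) * deriv g z) := by
      have t := (((hw_of_hasDerivAt hh'z).conj).mul (hw_of_hasDerivAt hh'z)).sub
        (((hw_of_hasDerivAt hg'z).conj).mul (hw_of_hasDerivAt hg'z))
      have hfn : jacC h g = fun w =>
          conj (deriv h w) * deriv h w - conj (deriv g w) * deriv g w :=
        funext (jacC_eq h g)
      rw [hfn]
      refine hw_of_L t (fun v => ?_)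
      rw [wl_apply]
      simp only [map_zero, map_add, map_mul, Complex.conj_conj]
      ring
    have hJw : wirtingerZ (jacC h g) z =
        conj (deriv h z) * deriv (deriv h) z - conj (deriv g z) * deriv (deriv g) z :=
      hwJ.wirt
    -- HW for the quotient
    have hdivfn : (fun w => Nmap h g w / jacC h g w)
        = fun w => Nmap h g w * (jacC h g w)⁻¹ := funext fun w => div_eq_mul_inv _ _
    have hwQ := hwN.mul (hwJ.inv hne)
    have hwNewton := (hw_id z).sub (hdivfn ▸ hwQ)
    have hval := hwNewton.wirt
    have hfn2 : newtonMapH h g = fun w => w - Nmap h g w * (jacC h g w)⁻¹ :=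
      funext fun w => by rw [newtonMapH, div_eq_mul_inv]
    rw [hfn2, hval, hJw]
    have h2 : (jacC h g z) ^ 2 ≠ 0 := pow_ne_zero _ hne
    field_simp
    ring
  refine ⟨?_, key⟩
  have hN0 : Nmap h g α = 0 := by simp [Nmap, hzero]
  rw [key α hα, hN0]
  simp
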